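/- Let G = (V, E) be a graph on n vertices and let k ≤ n. Define an instance of Seat Arrangement with agents P = V, binary symmetric preferences f_u(v) = f_v(u) = 1 if {u,v} ∈ E and 0 otherwise, and seat graph G' equal to the disjoint union of a clique on k vertices and n − k isolated vertices. Then G contains a clique of size k if and only if there is an arrangement π in G' with social welfare sw(π) = k(k − 1). -/

import Mathlib

open scoped Classical

noncomputable section

namespace SeatArrangement

variable {P V : Type*}

/-- The utility of agent `p` under arrangement `π`:
the sum, over the seat-graph neighbors `v` of `π p`, of `p`'s preference for the agent seated
at `v`. -/
def utility [Fintype V] (G : SimpleGraph V) (f : P → P → ℝ) (π : P ≃ V) (p : P) : ℝ :=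
  ∑ v : V, if G.Adj (π p) v then f p (π.symm v) else 0

/-- The social welfare of an arrangement: the sum of the utilities of all agents. -/
def sw [Fintype P] [Fintype V] (G : SimpleGraph V) (f : P → P → ℝ) (π : P ≃ V) : ℝ :=
  ∑ p : P, utility G f π p

/-- The `(p,q)`-swap arrangement of `π`. -/
def swapArr (π : P ≃ V) (p q : P) : P ≃ V := (Equiv.swap p q).trans π

/-- `{p, q}` is a blocking pair for `π`: both agents strictly improve by swapping seats. -/
def blocking [Fintype V] (G : SimpleGraph V) (f : P → P → ℝ) (π : P ≃ V) (p q : P) : Prop :=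
  p ≠ q ∧ utility G f π p < utility G f (swapArr π p q) p
        ∧ utility G f π q < utility G f (swapArr π p q) q

/-- An arrangement is stable if it has no blocking pair. -/
def stable [Fintype V] (G : SimpleGraph V) (f : P → P → ℝ) (π : P ≃ V) : Prop :=
  ∀ p q : P, ¬ blocking G f π p q

/-- An arrangement is envy-free if no agent would strictly improve by taking
another agent's seat (via a swap). -/
def envyFree [Fintype V] (G : SimpleGraph V) (f : P → P → ℝ) (π : P ≃ V) : Prop :=
  ∀ p q : P, p ≠ q → utility G f (swapArr π p q) p ≤ utility G f π p

/-- The least utility of an agent under `π` (for a finite nonempty set of agents, the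
infimum of the range of utilities is the minimum utility). -/
def minUtil [Fintype V] (G : SimpleGraph V) (f : P → P → ℝ) (π : P ≃ V) : ℝ :=
  sInf (Set.range (utility G f π))

/-- A maximin arrangement maximizes the least utility of an agent. -/
def maximin [Fintype V] (G : SimpleGraph V) (f : P → P → ℝ) (πf : P ≃ V) : Prop :=
  ∀ π : P ≃ V, minUtil G f π ≤ minUtil G f πf

/-- A maximum arrangement maximizes the social welfare. -/
def maximum [Fintype P] [Fintype V] (G : SimpleGraph V) (f : P → P → ℝ) (πm : P ≃ V) : Prop :=
  ∀ π : P ≃ V, sw G f π ≤ sw G f πm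

end SeatArrangement

open SeatArrangement

/-- The seat graph for STATEMENT 16: a clique on the first `k` of `n` vertices together
with `n - k` isolated vertices. -/
def cliquePlusIsolated (n k : ℕ) : SimpleGraph (Fin n) where
  Adj i j := i ≠ j ∧ i.val < k ∧ j.val < k
  symm := by
    constructor
    rintro i j ⟨h1, h2, h3⟩
    exact ⟨h1.symm, h3, h2⟩
  loopless := by
    constructor
    rintro i ⟨h1, -⟩
    exact h1 rfl

/-! The welfare of an arrangement counts the ordered pairs of distinct adjacent agents among the
`k` agents seated in the clique, so it is at most `k(k-1)`, with equality exactly when those agents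
form a clique of `G`. Conversely any `k`-set of agents can be seated in the clique. -/

open Finset

section

variable {α β P : Type*}

lemma Finset.exists_equiv_mem_iff_mem [Fintype α] [Fintype β]
    (hαβ : Fintype.card α = Fintype.card β) {s : Finset α} {t : Finset β} (hst : #s = #t) :
    ∃ e : α ≃ β, ∀ x, e x ∈ t ↔ x ∈ s := by
  let eIn : s ≃ t := s.equivOfCardEq hst
  let eOut : {x // x ∉ s} ≃ {y // y ∉ t} :=
    Fintype.equivOfCardEq (by simp [Fintype.card_subtype_compl, hαβ, hst])
  refine ⟨(Equiv.sumCompl (· ∈ s)).symm.trans ((eIn.sumCongr eOut).trans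
    (Equiv.sumCompl (· ∈ t))), fun x => ?_⟩
  by_cases hx : x ∈ s
  · simp [Equiv.sumCompl_symm_apply_of_pos hx, (eIn ⟨x, hx⟩).2, hx]
  · simp [Equiv.sumCompl_symm_apply_of_neg hx, (eOut ⟨x, hx⟩).2, hx]

lemma SimpleGraph.sum_offDiag_adj_eq_card_iff_isClique (G : SimpleGraph α) (s : Finset α) :
    ∑ x ∈ s.offDiag, (if G.Adj x.1 x.2 then (1 : ℝ) else 0) = #s.offDiag ↔ G.IsClique s := by
  rw [sum_boole, Nat.cast_inj, card_filter_eq_iff]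
  simp only [mem_offDiag, and_imp, Prod.forall]
  exact ⟨fun h x hx y hy => h x y hx hy, fun h x y hx hy => h hx hy⟩

lemma Finset.cast_card_offDiag (s : Finset α) : (#s.offDiag : ℝ) = #s * (#s - 1) := by
  rw [offDiag_card, Nat.cast_sub (Nat.le_mul_self _)]
  push_cast
  ring

namespace SeatArrangement

lemma sw_eq_sum_adj [Fintype P] [Fintype β] (G : SimpleGraph β) (f : P → P → ℝ) (π : P ≃ β) :
    sw G f π = ∑ p, ∑ q, if G.Adj (π p) (π q) then f p q else 0 := by
  unfold sw utility
  refine sum_congr rfl fun p _ => Fintype.sum_equiv π.symm _ _ fun v => ?_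
  simp

def cliqueOccupants [Fintype P] {n : ℕ} (π : P ≃ Fin n) (k : ℕ) : Finset P :=
  {p | (π p).val < k}

lemma card_cliqueOccupants [Fintype P] {n k : ℕ} (π : P ≃ Fin n) (hk : k ≤ n) :
    #(cliqueOccupants π k) = k := by
  rw [cliqueOccupants, card_equiv π (t := {i : Fin n | i.val < k}) (by simp),
    Fin.card_filter_val_lt, min_eq_right hk]

lemma sw_cliquePlusIsolated [Fintype P] {n : ℕ} (k : ℕ) (f : P → P → ℝ) (π : P ≃ Fin n) :
    sw (cliquePlusIsolated n k) f π = ∑ x ∈ (cliqueOccupants π k).offDiag, f x.1 x.2 := by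
  rw [sw_eq_sum_adj, ← sum_product', ← sum_filter]
  congr 1
  ext ⟨p, q⟩
  simp only [cliquePlusIsolated, cliqueOccupants, univ_product_univ, mem_filter, mem_univ,
    true_and, mem_offDiag, ne_eq, EmbeddingLike.apply_eq_iff_eq]
  tauto

end SeatArrangement

end

theorem clique_iff_max_welfare_general {W : Type*} [Fintype W]
    (G : SimpleGraph W) (k : ℕ) (hk : k ≤ Fintype.card W) :
    (∃ S : Finset W, G.IsNClique k S) ↔
    (∃ π : W ≃ Fin (Fintype.card W),
      sw (cliquePlusIsolated (Fintype.card W) k)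
        (fun u v => if G.Adj u v then 1 else 0) π = (k : ℝ) * ((k : ℝ) - 1)) := by
  simp only [sw_cliquePlusIsolated]
  constructor
  · rintro ⟨S, hS⟩
    obtain ⟨π, hπ⟩ := Finset.exists_equiv_mem_iff_mem (Fintype.card_fin _).symm (s := S)
      (t := {i : Fin (Fintype.card W) | i.val < k})
      (by rw [hS.card_eq, Fin.card_filter_val_lt, min_eq_right hk])
    have hS_occupants : cliqueOccupants π k = S := by ext; simp [cliqueOccupants, ← hπ]
    refine ⟨π, ?_⟩
    rw [hS_occupants, ← hS.card_eq, ← cast_card_offDiag,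
      G.sum_offDiag_adj_eq_card_iff_isClique]
    exact hS.isClique
  · rintro ⟨π, hπ⟩
    have hcard := card_cliqueOccupants π hk
    rw [show (k : ℝ) * (k - 1) = #(cliqueOccupants π k).offDiag by rw [cast_card_offDiag, hcard],
      G.sum_offDiag_adj_eq_card_iff_isClique] at hπ
    exact ⟨_, hπ, hcard⟩

/-- for a graph `G` on `n` vertices and `k ≤ n`, with agents `V(G)`, binary
symmetric preferences given by adjacency in `G`, and seat graph a clique on `k` vertices
plus `n − k` isolated vertices, `G` has a clique of size `k` if and only if some arrangement
has social welfare `k(k − 1)`. -/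
theorem clique_iff_max_welfare {W : Type*} [Fintype W] [DecidableEq W]
    (G : SimpleGraph W) (k : ℕ) (hk : k ≤ Fintype.card W) :
    (∃ S : Finset W, G.IsNClique k S) ↔
    (∃ π : W ≃ Fin (Fintype.card W),
      sw (cliquePlusIsolated (Fintype.card W) k)
        (fun u v => if G.Adj u v then 1 else 0) π = (k : ℝ) * ((k : ℝ) - 1)) :=
  clique_iff_max_welfare_general G k hk
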